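/- arXiv:1206.2965 — 2 statements merged into one kernel-verified Lean document; each statement's English description precedes it below -/
import Mathlib

section
/- There exists a constant C_K > 0, depending only on K, such that for every adele ξ = (ξ_ν) ∈ 𝔸_K with ξ_ν ≠ 0 for all ν and ∏_ν |ξ_ν|_ν > C_K, there exists λ ∈ K^× with |λ|_ν ≤ |ξ_ν|_ν for all places ν of K. -/
/-!
Write `|ξ_𝔭|_𝔭 = N(𝔭) ^ m_𝔭`. Every element `λ` of the fractional ideal `I = ∏ 𝔭 ^ (-m_𝔭)`
satisfies `|λ|_𝔭 ≤ |ξ_𝔭|_𝔭` at all finite places, and `N(I) = (∏_𝔭 |ξ_𝔭|_𝔭)⁻¹`. Minkowski's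
convex body theorem for the lattice `I` and the box `|x_w| < |ξ_w|` at the infinite places gives a
nonzero `λ ∈ I` once the volume of the box, a constant multiple of `∏_w |ξ_w|_w`, exceeds `N(I)`
times `minkowskiBound K 1`, i.e. once `∏_ν |ξ_ν|_ν` exceeds a constant depending only on `K`.
-/

set_option synthInstance.maxHeartbeats 1000000
set_option maxHeartbeats 1000000

open NumberField IsDedekindDomain

noncomputable section

namespace AdeleAux

variable {K : Type*} [Field K] [NumberField K]

theorem absNorm_nnreal_ne_zero (v : HeightOneSpectrum (𝓞 K)) :
    ((Ideal.absNorm v.asIdeal : NNReal)) ≠ 0 := by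
  exact_mod_cast fun h => v.ne_bot (Ideal.absNorm_eq_zero_iff.mp (by exact_mod_cast h))

/-- The normalized absolute value at a finite place `v` of `K`, on the
`v`-adic completion of `K`: a uniformizer has absolute value `Nm(𝔭)⁻¹`. -/
def finAbs (v : HeightOneSpectrum (𝓞 K)) (x : v.adicCompletion K) : ℝ :=
  (WithZeroMulInt.toNNReal (absNorm_nnreal_ne_zero v) (Valued.v x) : ℝ)

end AdeleAux

open FractionalIdeal
open scoped nonZeroDivisors NNReal

namespace IsDedekindDomain.HeightOneSpectrum

variable {R : Type*} [CommRing R] [IsDedekindDomain R] {K : Type*} [Field K] [Algebra R K]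
  [IsFractionRing R K]

theorem valuation_eq_exp_neg_count (v : HeightOneSpectrum R) {a : K} (ha : a ≠ 0) :
    v.valuation K a = WithZero.exp (-count K v (spanSingleton R⁰ a)) := by
  obtain ⟨⟨r, s⟩, rfl⟩ := IsLocalization.mk'_surjective R⁰ a
  have hr : r ≠ 0 := by
    rintro rfl
    exact ha (IsLocalization.mk'_zero _)
  have hspan : spanSingleton R⁰ (IsLocalization.mk' K r s) =
      spanSingleton R⁰ (algebraMap R K s)⁻¹ * (Ideal.span {r} : FractionalIdeal R⁰ K) := by
    rw [coeIdeal_span_singleton, spanSingleton_mul_spanSingleton,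
      IsFractionRing.mk'_eq_div, div_eq_mul_inv, mul_comm]
  rw [count_well_defined K v (spanSingleton_eq_zero_iff.not.mpr ha) hspan,
    valuation_of_mk', intValuation_apply, intValuation_apply,
    v.intValuationDef_if_neg hr, v.intValuationDef_if_neg (nonZeroDivisors.coe_ne_zero s),
    ← WithZero.exp_sub]
  ring_nf

variable (K) in
def idealOfExponents (m : HeightOneSpectrum R → ℤ) : FractionalIdeal R⁰ K :=
  ∏ᶠ v, (v.asIdeal : FractionalIdeal R⁰ K) ^ m v

theorem idealOfExponents_ne_zero (m : HeightOneSpectrum R → ℤ) :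
    idealOfExponents K m ≠ 0 :=
  finprod_induction (· ≠ 0) one_ne_zero (fun _ _ => mul_ne_zero)
    fun v => zpow_ne_zero _ (coeIdeal_ne_zero.mpr v.ne_bot)

theorem valuation_le_of_mem_idealOfExponents {m : HeightOneSpectrum R → ℤ}
    (hm : {v | m v ≠ 0}.Finite) {a : K} (ha : a ∈ idealOfExponents K m)
    (v : HeightOneSpectrum R) : v.valuation K a ≤ WithZero.exp (-m v) := by
  rcases eq_or_ne a 0 with rfl | ha0
  · simp
  have hcount : m v ≤ count K v (spanSingleton R⁰ a) := by
    have := count_mono K v (spanSingleton_eq_zero_iff.not.mpr ha0) (spanSingleton_le_iff_mem.mpr ha)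
    rwa [idealOfExponents, count_finprod K v m (Filter.eventually_cofinite.mpr hm)] at this
  rw [valuation_eq_exp_neg_count v ha0, WithZero.exp_le_exp]
  omega

end IsDedekindDomain.HeightOneSpectrum

namespace IsDedekindDomain.HeightOneSpectrum

variable {K : Type*} [Field K] [NumberField K]

theorem one_lt_absNorm (v : HeightOneSpectrum (𝓞 K)) :
    1 < (Ideal.absNorm v.asIdeal : ℝ≥0) := by
  have h0 : Ideal.absNorm v.asIdeal ≠ 0 := fun h => v.ne_bot (Ideal.absNorm_eq_zero_iff.mp h)
  have h1 : Ideal.absNorm v.asIdeal ≠ 1 := fun h => v.isPrime.ne_top (Ideal.absNorm_eq_one_iff.mp h)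
  exact_mod_cast (by omega : 1 < Ideal.absNorm v.asIdeal)

theorem absNorm_idealOfExponents {m : HeightOneSpectrum (𝓞 K) → ℤ} (hm : {v | m v ≠ 0}.Finite) :
    (absNorm (idealOfExponents K m) : ℝ) = ∏ᶠ v, (Ideal.absNorm v.asIdeal : ℝ) ^ m v := by
  have hsupp : Function.HasFiniteMulSupport fun v : HeightOneSpectrum (𝓞 K) =>
      (v.asIdeal : FractionalIdeal (𝓞 K)⁰ K) ^ m v :=
    hm.subset fun v hv h => hv (by simp [h])
  have := map_finprod ((Rat.castHom ℝ).toMonoidHom.comp absNorm.toMonoidHom) hsupp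
  simpa [coeIdeal_absNorm, idealOfExponents] using this

end IsDedekindDomain.HeightOneSpectrum

namespace AdeleAux

open IsDedekindDomain.HeightOneSpectrum WithZeroMulInt

variable {K : Type*} [Field K] [NumberField K]

section

variable (v : HeightOneSpectrum (𝓞 K))

theorem finAbs_le_finAbs_iff {x y : v.adicCompletion K} :
    finAbs v x ≤ finAbs v y ↔ Valued.v x ≤ Valued.v y := by
  rw [finAbs, finAbs, NNReal.coe_le_coe, (toNNReal_strictMono (one_lt_absNorm v)).le_iff_le]

theorem finAbs_eq_one_iff {x : v.adicCompletion K} : finAbs v x = 1 ↔ Valued.v x = 1 := by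
  rw [finAbs, NNReal.coe_eq_one, toNNReal_eq_one_iff _ _ (one_lt_absNorm v).ne']

theorem finAbs_of_valued_eq_exp {x : v.adicCompletion K} {n : ℤ} (hx : Valued.v x = .exp n) :
    finAbs v x = (Ideal.absNorm v.asIdeal : ℝ) ^ n := by
  rw [finAbs, toNNReal_neg_apply _ (hx ▸ WithZero.exp_ne_zero), WithZero.toAdd_unzero_eq_log, hx,
    WithZero.log_exp, NNReal.coe_zpow, NNReal.coe_natCast]

end

theorem exists_fractionalIdeal_le_finiteAdele (x : FiniteAdeleRing (𝓞 K) K)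
    (hx : ∀ v, x v ≠ 0) (hfin : {v | finAbs v (x v) ≠ 1}.Finite) :
    ∃ I : FractionalIdeal (𝓞 K)⁰ K, I ≠ 0 ∧ (absNorm I : ℝ) * ∏ᶠ v, finAbs v (x v) = 1 ∧
      ∀ a ∈ I, ∀ v, v.valuation K a ≤ Valued.v (x v) := by
  choose m hm using fun v => (⟨_, WithZero.exp_log ((Valuation.ne_zero_iff _).mpr (hx v))⟩ :
    ∃ n : ℤ, WithZero.exp n = Valued.v (x v))
  have hfinAbs v : finAbs v (x v) = (Ideal.absNorm v.asIdeal : ℝ) ^ m v :=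
    finAbs_of_valued_eq_exp v (hm v).symm
  have hsupp : {v | (-m) v ≠ 0}.Finite := by
    refine hfin.subset fun v hv h => hv ?_
    rw [finAbs_eq_one_iff, ← hm v, WithZero.exp_eq_one] at h
    rw [Pi.neg_apply, h, neg_zero]
  have hprod_pos : 0 < ∏ᶠ v, finAbs v (x v) :=
    finprod_induction (0 < ·) one_pos (fun _ _ => mul_pos) fun v => by
      rw [hfinAbs]; exact zpow_pos (zero_lt_one.trans (by exact_mod_cast one_lt_absNorm v)) _
  refine ⟨idealOfExponents K (-m), idealOfExponents_ne_zero _, ?_, fun a ha v => ?_⟩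
  · rw [absNorm_idealOfExponents hsupp]
    simp_rw [hfinAbs, Pi.neg_apply, zpow_neg, finprod_inv_distrib, ← hfinAbs]
    exact inv_mul_cancel₀ hprod_pos.ne'
  · simpa [hm] using valuation_le_of_mem_idealOfExponents hsupp ha v

end AdeleAux

namespace NumberField.mixedEmbedding

open scoped ENNReal

variable (K : Type*) [Field K] [NumberField K]

def minkowskiConstant : ℝ := (minkowskiBound K 1).toReal / convexBodyLTFactor K

theorem minkowskiConstant_pos : 0 < minkowskiConstant K :=
  div_pos (ENNReal.toReal_pos (minkowskiBound_pos K 1).ne' (minkowskiBound_lt_top K 1).ne)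
    (by exact_mod_cast pos_iff_ne_zero.mpr (convexBodyLTFactor_ne_zero K))

theorem minkowskiBound_eq_absNorm_mul (I : (FractionalIdeal (𝓞 K)⁰ K)ˣ) :
    minkowskiBound K I = .ofReal (absNorm (I : FractionalIdeal (𝓞 K)⁰ K)) * minkowskiBound K 1 := by
  rw [minkowskiBound, minkowskiBound, volume_fundamentalDomain_fractionalIdealLatticeBasis,
    volume_fundamentalDomain_fractionalIdealLatticeBasis, Units.val_one, absNorm_one, Rat.cast_one,
    ENNReal.ofReal_one, one_mul, mul_assoc]

variable {K}

theorem exists_ne_zero_mem_lt_of_absNorm_mul_lt (I : (FractionalIdeal (𝓞 K)⁰ K)ˣ)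
    (f : InfinitePlace K → ℝ≥0)
    (h : (absNorm (I : FractionalIdeal (𝓞 K)⁰ K) : ℝ) * minkowskiConstant K <
      ∏ w, (f w : ℝ) ^ w.mult) :
    ∃ a ∈ (I : FractionalIdeal (𝓞 K)⁰ K), a ≠ 0 ∧ ∀ w : InfinitePlace K, w a < f w := by
  refine exists_ne_zero_mem_ideal_lt K I ?_
  rw [convexBodyLT_volume, minkowskiBound_eq_absNorm_mul]
  have hN : (0 : ℝ) ≤ absNorm (I : FractionalIdeal (𝓞 K)⁰ K) := by exact_mod_cast absNorm_nonneg _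
  rw [← ENNReal.ofReal_toReal (minkowskiBound_lt_top K 1).ne, ← ENNReal.ofReal_mul hN,
    ENNReal.ofReal_lt_iff_lt_toReal (by positivity) (by finiteness)]
  have hc : (0 : ℝ) < convexBodyLTFactor K := by
    exact_mod_cast pos_iff_ne_zero.mpr (convexBodyLTFactor_ne_zero K)
  rw [minkowskiConstant, mul_div_assoc', div_lt_iff₀ hc] at h
  simpa [ENNReal.toReal_mul, ENNReal.toReal_prod, mul_comm] using h

end NumberField.mixedEmbedding

namespace NumberField.AdeleRing

variable {K : Type*} [Field K] [NumberField K]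

theorem norm_algebraMap_fst (a : K) (w : InfinitePlace K) :
    ‖(algebraMap K (AdeleRing (𝓞 K) K) a).1 w‖ = w a :=
  UniformSpace.Completion.norm_coe (E := WithAbs w.1) (WithAbs.toAbs w.1 a)

theorem valued_algebraMap_snd (a : K) (v : HeightOneSpectrum (𝓞 K)) :
    Valued.v ((algebraMap K (AdeleRing (𝓞 K) K) a).2 v) = v.valuation K a :=
  v.valuedAdicCompletion_eq_valuation' a

end NumberField.AdeleRing

/-- Cassels: for a number field `K` there is a constant `C_K > 0`
such that every adele `ξ` all of whose components are nonzero and whose total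
absolute value `∏_ν |ξ_ν|_ν` (a well-defined finite product once all but
finitely many factors are `1`, which is implicit in the hypothesis
`∏_ν |ξ_ν|_ν > C_K > 0`) exceeds `C_K` dominates a principal adele: there is
`λ ∈ K^×` with `|λ|_ν ≤ |ξ_ν|_ν` for all places `ν` of `K`.  The normalized
absolute values are as in the context: `‖·‖ ^ mult` at infinite places, and at
finite places a uniformizer at `𝔭` has absolute value `Nm(𝔭)⁻¹`. -/
theorem stmt_8 (K : Type*) [Field K] [NumberField K] :
    ∃ C : ℝ, 0 < C ∧
      ∀ ξ : AdeleRing (𝓞 K) K,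
        (∀ v : InfinitePlace K, ξ.1 v ≠ 0) →
        (∀ v : HeightOneSpectrum (𝓞 K), ξ.2 v ≠ 0) →
        {v : HeightOneSpectrum (𝓞 K) | AdeleAux.finAbs v (ξ.2 v) ≠ 1}.Finite →
        C < (∏ v : InfinitePlace K, ‖ξ.1 v‖ ^ v.mult) *
              (∏ᶠ v : HeightOneSpectrum (𝓞 K), AdeleAux.finAbs v (ξ.2 v)) →
        ∃ l : K, l ≠ 0 ∧
          (∀ v : InfinitePlace K,
            ‖(algebraMap K (AdeleRing (𝓞 K) K) l).1 v‖ ^ v.mult ≤ ‖ξ.1 v‖ ^ v.mult) ∧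
          (∀ v : HeightOneSpectrum (𝓞 K),
            AdeleAux.finAbs v ((algebraMap K (AdeleRing (𝓞 K) K) l).2 v) ≤
              AdeleAux.finAbs v (ξ.2 v)) := by
  refine ⟨mixedEmbedding.minkowskiConstant K, mixedEmbedding.minkowskiConstant_pos K,
    fun ξ _ hfin hsupp hC => ?_⟩
  obtain ⟨I, hI, hnorm, hval⟩ := AdeleAux.exists_fractionalIdeal_le_finiteAdele ξ.2 hfin hsupp
  have hN : 0 < (absNorm I : ℝ) :=
    lt_of_le_of_ne (by exact_mod_cast absNorm_nonneg I)
      (left_ne_zero_of_mul_eq_one hnorm).symm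
  have hbound : (absNorm I : ℝ) * mixedEmbedding.minkowskiConstant K <
      ∏ w : InfinitePlace K, ‖ξ.1 w‖ ^ w.mult :=
    calc _ < absNorm I * ((∏ w : InfinitePlace K, ‖ξ.1 w‖ ^ w.mult) *
          ∏ᶠ v, AdeleAux.finAbs v (ξ.2 v)) := mul_lt_mul_of_pos_left hC hN
      _ = _ := by rw [mul_left_comm, hnorm, mul_one]
  obtain ⟨a, haI, ha0, hlt⟩ :=
    mixedEmbedding.exists_ne_zero_mem_lt_of_absNorm_mul_lt (.mk0 I hI) (‖ξ.1 ·‖₊) hbound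
  refine ⟨a, ha0, fun w => ?_, fun v => ?_⟩
  · rw [AdeleRing.norm_algebraMap_fst]
    exact pow_le_pow_left₀ (apply_nonneg w a) (hlt w).le _
  · rw [AdeleAux.finAbs_le_finAbs_iff, AdeleRing.valued_algebraMap_snd]
    exact hval a haI v
end
end

section
/- Let a, b ∈ ℤ, let q be an odd prime, and let x₀, x₁, x₂, x₃ ∈ ℤ satisfy x₀² − a·x₁² − b·x₂² + a·b·x₃² = 1, x₀ ≡ 1 (mod q), and q ∣ x₁, q ∣ x₂, q ∣ x₃. Then q² divides x₀ − 1, and writing x₀ = n·q² + 1 and x_m = q·y_m for m = 1, 2, 3, the integers n, y₁, y₂, y₃ satisfy a·y₁² + b·y₂² − a·b·y₃² = n²·q² + 2·n. -/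
/-- Let `a, b ∈ ℤ`, let `q` be an odd prime, and let
`x₀, x₁, x₂, x₃ ∈ ℤ` satisfy `x₀² − a·x₁² − b·x₂² + a·b·x₃² = 1`,
`x₀ ≡ 1 (mod q)`, and `q ∣ x₁, q ∣ x₂, q ∣ x₃`. Then `q²` divides `x₀ − 1`, and
writing `x₀ = n·q² + 1` and `x_m = q·y_m` for `m = 1, 2, 3`, the integers
`n, y₁, y₂, y₃` satisfy `a·y₁² + b·y₂² − a·b·y₃² = n²·q² + 2·n`. -/
theorem stmt_13 (a b : ℤ) (q : ℕ) (hq : q.Prime) (hodd : q ≠ 2)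
    (x₀ x₁ x₂ x₃ : ℤ)
    (hnorm : x₀ ^ 2 - a * x₁ ^ 2 - b * x₂ ^ 2 + a * b * x₃ ^ 2 = 1)
    (h₀ : (q : ℤ) ∣ x₀ - 1) (h₁ : (q : ℤ) ∣ x₁) (h₂ : (q : ℤ) ∣ x₂)
    (h₃ : (q : ℤ) ∣ x₃) :
    (q : ℤ) ^ 2 ∣ x₀ - 1 ∧
      ∀ n y₁ y₂ y₃ : ℤ, x₀ = n * (q : ℤ) ^ 2 + 1 → x₁ = (q : ℤ) * y₁ →
        x₂ = (q : ℤ) * y₂ → x₃ = (q : ℤ) * y₃ →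
        a * y₁ ^ 2 + b * y₂ ^ 2 - a * b * y₃ ^ 2 = n ^ 2 * (q : ℤ) ^ 2 + 2 * n := by
  have hq0 : (q : ℤ) ≠ 0 := by exact_mod_cast hq.ne_zero
  have hq2 : (q : ℤ) ^ 2 ≠ 0 := pow_ne_zero _ hq0
  constructor
  · -- q² ∣ x₀ - 1
    obtain ⟨u, hu⟩ := h₁
    obtain ⟨v, hv⟩ := h₂
    obtain ⟨w, hw⟩ := h₃
    have hd : (q : ℤ) ^ 2 ∣ x₀ ^ 2 - 1 :=
      ⟨a * u ^ 2 + b * v ^ 2 - a * b * w ^ 2, by subst hu hv hw; linear_combination hnorm⟩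
    have hcop : IsCoprime ((q : ℤ)) (x₀ + 1) := by
      rw [Prime.coprime_iff_not_dvd (Nat.prime_iff_prime_int.mp hq)]
      intro hdvd
      have h2 : (q : ℤ) ∣ 2 := by
        have := dvd_sub hdvd h₀
        simpa using this
      have : (q : ℤ) ∣ 2 → q ∣ 2 := fun h => by exact_mod_cast h
      have hq2' := this h2
      exact hodd ((Nat.prime_dvd_prime_iff_eq hq Nat.prime_two).mp hq2')
    have hcop2 : IsCoprime ((q : ℤ) ^ 2) (x₀ + 1) := hcop.pow_left
    have : x₀ ^ 2 - 1 = (x₀ - 1) * (x₀ + 1) := by ring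
    rw [this] at hd
    exact hcop2.dvd_of_dvd_mul_right hd
  · intro n y₁ y₂ y₃ e0 e1 e2 e3
    subst e0 e1 e2 e3
    apply mul_left_cancel₀ hq2
    linear_combination -hnorm
end
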